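/- Let T be a finite system with inputs I and outputs O, let π be a trace of T, let E ⊆ (ℕ → Set I × Set O) be an effect, and suppose C ⊆ (ℕ → Set I) is a cause of E on π in T with respect to the subset similarity relation. If E is a guarantee property, then C is a guarantee property. -/
import Mathlib


/-- The prefix of length `n` of the infinite word `π`, i.e. the list `[π 0, …, π (n-1)]`. -/
def wordPrefix {A : Type*} (π : ℕ → A) (n : ℕ) : List A := (List.range n).map π

/-- The set of prefixes of length `n` of words in `L`. -/
def prefN {A : Type*} (L : Set (ℕ → A)) (n : ℕ) : Set (List A) :=
  (fun π => wordPrefix π n) '' L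

/-- The set of all prefixes of words in `L`. -/
def prefAll {A : Type*} (L : Set (ℕ → A)) : Set (List A) := ⋃ n, prefN L n

/-- The set of all prefixes of the single word `π`. -/
def prefWord {A : Type*} (π : ℕ → A) : Set (List A) := {w | ∃ n, w = wordPrefix π n}

/-- `f` is prefix-continuous. -/
def PrefixContinuous {A B : Type*} (f : (ℕ → A) → Set (ℕ → B)) : Prop :=
  ∀ (n : ℕ) (π : ℕ → A), ∃ m : ℕ, ∀ π' : ℕ → A,
    wordPrefix π' m = wordPrefix π m → prefN (f π) n = prefN (f π') n

/-- `f` is prefix-closed. -/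
def PrefixClosed {A B : Type*} (f : (ℕ → A) → Set (ℕ → B)) : Prop :=
  ∀ (π : ℕ → A) (σ : ℕ → B), prefWord σ ⊆ prefAll (f π) → σ ∈ f π

/-- `f` is prefix-compact. -/
def PrefixCompact {A B : Type*} (f : (ℕ → A) → Set (ℕ → B)) : Prop :=
  ∀ (n : ℕ) (π : ℕ → A), (prefN (f π) n).Finite

/-- The universal preimage of `S` under `f`. -/
def univPreimage {A B : Type*} (f : (ℕ → A) → Set (ℕ → B)) (S : Set (ℕ → B)) :
    Set (ℕ → A) := {π | f π ⊆ S}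

/-- The existential preimage of `S` under `f`. -/
def existPreimage {A B : Type*} (f : (ℕ → A) → Set (ℕ → B)) (S : Set (ℕ → B)) :
    Set (ℕ → A) := {π | (f π ∩ S).Nonempty}

/-- `L` is a safety property. -/
def IsSafetyProperty {B : Type*} (L : Set (ℕ → B)) : Prop :=
  ∃ Φ : Set (List B), L = {π | ∀ n : ℕ, wordPrefix π n ∈ Φ}

/-- `L` is a guarantee property. -/
def IsGuaranteeProperty {B : Type*} (L : Set (ℕ → B)) : Prop :=
  ∃ Φ : Set (List B), L = {π | ∃ n : ℕ, wordPrefix π n ∈ Φ}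

/-- `L` is a recurrence property. -/
def IsRecurrenceProperty {B : Type*} (L : Set (ℕ → B)) : Prop :=
  ∃ Φ : Set (List B), L = {π | {n : ℕ | wordPrefix π n ∈ Φ}.Infinite}

/-- `L` is a persistence property. -/
def IsPersistenceProperty {B : Type*} (L : Set (ℕ → B)) : Prop :=
  ∃ Φ : Set (List B), L = {π | {n : ℕ | wordPrefix π n ∈ Φ}.Finite}

/-- A (finite-state) reactive system with states `S`, inputs `I` and outputs `O`. -/
structure FinSystem (S I O : Type*) where
  init : S
  tr : S → Set I → Set S
  lab : S → Set O

/-- `π` is a trace of the system `T`. -/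
def IsTrace {S I O : Type*} (T : FinSystem S I O) (π : ℕ → Set I × Set O) : Prop :=
  ∃ s : ℕ → S, s 0 = T.init ∧
    ∀ n : ℕ, s (n + 1) ∈ T.tr (s n) (π n).1 ∧ (π n).2 = T.lab (s (n + 1))

/-- The input component of a trace. -/
def traceInputs {I O : Type*} (π : ℕ → Set I × Set O) : ℕ → Set I := fun n => (π n).1

/-- The subset similarity relation relative to the observed trace `π`:
`σ` is at least as similar to `π` as the input sequence `ρ`. -/
def SubsetSim {I O : Type*} (π σ : ℕ → Set I × Set O) (ρ : ℕ → Set I) : Prop :=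
  ∀ (n : ℕ) (i : I), ((i ∈ (σ n).1) ≠ (i ∈ (π n).1)) → ((i ∈ ρ n) ≠ (i ∈ (π n).1))

/-- The SAT condition. -/
def SatCond {S I O : Type*} (T : FinSystem S I O) (π : ℕ → Set I × Set O)
    (E : Set (ℕ → Set I × Set O)) (C : Set (ℕ → Set I)) : Prop :=
  ∀ π' : ℕ → Set I × Set O, IsTrace T π' → traceInputs π' = traceInputs π →
    traceInputs π' ∈ C ∧ π' ∈ E

/-- The CF condition. -/
def CfCond {S I O : Type*} (T : FinSystem S I O) (π : ℕ → Set I × Set O)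
    (E : Set (ℕ → Set I × Set O)) (C : Set (ℕ → Set I)) : Prop :=
  ∀ ρ : ℕ → Set I, ρ ∉ C → ∃ σ : ℕ → Set I × Set O,
    IsTrace T σ ∧ SubsetSim π σ ρ ∧ σ ∉ E

/-- `C` is a cause of the effect `E` on the trace `π` in the system `T`,
with respect to the subset similarity relation. -/
def IsCause {S I O : Type*} (T : FinSystem S I O) (π : ℕ → Set I × Set O)
    (E : Set (ℕ → Set I × Set O)) (C : Set (ℕ → Set I)) : Prop :=
  SatCond T π E C ∧ CfCond T π E C ∧
    ¬ ∃ C' : Set (ℕ → Set I), C' ⊂ C ∧ SatCond T π E C' ∧ CfCond T π E C'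


section CauseGuaranteeAux

lemma wordPrefix_length {A : Type*} (π : ℕ → A) (n : ℕ) : (wordPrefix π n).length = n := by
  simp [wordPrefix]

lemma wordPrefix_eq_iff {A : Type*} (a b : ℕ → A) (n : ℕ) :
    wordPrefix a n = wordPrefix b n ↔ ∀ k < n, a k = b k := by
  simp [wordPrefix, List.map_eq_map_iff, List.mem_range]

lemma ultra_exists_limit {B : Type*} [Finite B] (U : Ultrafilter ℕ) (g : ℕ → B) :
    ∃ b, {n | g n = b} ∈ U := by
  by_contra h
  push_neg at h
  have h2 : ∀ b : B, {n | g n = b}ᶜ ∈ U := fun b => Ultrafilter.compl_mem_iff_notMem.2 (h b)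
  have h3 : (⋂ b : B, {n | g n = b}ᶜ) ∈ U := Filter.iInter_mem.2 h2
  have he : (⋂ b : B, {n | g n = b}ᶜ) = ∅ :=
    Set.eq_empty_iff_forall_notMem.2 fun n hn => (Set.mem_iInter.1 hn (g n)) rfl
  rw [he] at h3
  exact Filter.empty_notMem (U : Filter ℕ) h3

lemma ultra_limit_seq {B : Type*} [Finite B] (τseq : ℕ → ℕ → B) :
    ∃ τ : ℕ → B, ∀ m : ℕ, ∃ n : ℕ, n ≥ m ∧ ∀ k < m, τseq n k = τ k := by
  classical
  set U := Filter.hyperfilter ℕ with hU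
  choose τ hτ using fun k => ultra_exists_limit U (fun n => τseq n k)
  refine ⟨τ, fun m => ?_⟩
  have h1 : {n : ℕ | n ≥ m} ∈ U := by
    apply Filter.mem_hyperfilter_of_finite_compl
    have : {n : ℕ | n ≥ m}ᶜ ⊆ Set.Iio m := by
      intro n hn
      simp only [Set.mem_compl_iff, Set.mem_setOf_eq, not_le] at hn
      exact hn
    exact (Set.finite_Iio m).subset this
  have h2 : (⋂ k ∈ Set.Iio m, {n : ℕ | τseq n k = τ k}) ∈ U :=
    (Filter.biInter_mem (Set.finite_Iio m)).2 (fun k _ => hτ k)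
  obtain ⟨n, hn⟩ := Ultrafilter.nonempty_of_mem (Filter.inter_mem h1 h2)
  exact ⟨n, hn.1, fun k hk => Set.mem_iInter₂.1 hn.2 k hk⟩

/-- The set of "good" prefixes for `C`: finite input-words all of whose
infinite extensions lie in `C`. -/
def causePhi {I : Type*} (C : Set (ℕ → Set I)) : Set (List (Set I)) :=
  {w | ∀ ρ : ℕ → Set I, wordPrefix ρ w.length = w → ρ ∈ C}

/-- The guarantee property generated by `causePhi C`. -/
def causeG {I : Type*} (C : Set (ℕ → Set I)) : Set (ℕ → Set I) :=
  {ρ | ∃ n, wordPrefix ρ n ∈ causePhi C}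

lemma causeG_subset {I : Type*} (C : Set (ℕ → Set I)) : causeG C ⊆ C := by
  rintro ρ ⟨n, hn⟩
  exact hn ρ (by rw [wordPrefix_length])

lemma key_counterfactual {S I O : Type*} [Fintype S] [Fintype I] [Fintype O]
    (T : FinSystem S I O) (π : ℕ → Set I × Set O)
    (E : Set (ℕ → Set I × Set O)) (ΦE : Set (List (Set I × Set O)))
    (hΦE : E = {x | ∃ n : ℕ, wordPrefix x n ∈ ΦE})
    (C : Set (ℕ → Set I)) (hCf : CfCond T π E C)
    (ρ : ℕ → Set I) (hρ : ρ ∉ causeG C) :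
    ∃ σ, IsTrace T σ ∧ SubsetSim π σ ρ ∧ σ ∉ E := by
  classical
  -- for each n, some word agreeing with ρ on its first n letters is not in C
  have h1 : ∀ n : ℕ, ∃ ρ' : ℕ → Set I, (∀ k < n, ρ' k = ρ k) ∧ ρ' ∉ C := by
    intro n
    by_contra h
    push_neg at h
    refine hρ ⟨n, fun ρ' hρ' => ?_⟩
    rw [wordPrefix_length] at hρ'
    exact h ρ' (fun k hk => (wordPrefix_eq_iff ρ' ρ n).1 hρ' k hk)
  choose ρseq hρpre hρC using h1
  choose σseq hσtr hσsim hσE using fun n => hCf (ρseq n) (hρC n)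
  choose sseq hs0 hsstep using hσtr
  have hfin : Finite ((Set I × Set O) × S) := by
    have : Finite (Set I) := inferInstance
    infer_instance
  obtain ⟨τ, hτ⟩ := ultra_limit_seq (fun n k => (σseq n k, sseq n (k + 1)))
  set σ : ℕ → Set I × Set O := fun k => (τ k).1 with hσdef
  set s : ℕ → S := fun k => Nat.rec T.init (fun j _ => (τ j).2) k with hsdef
  refine ⟨σ, ⟨s, rfl, ?_⟩, ?_, ?_⟩
  · -- trace property
    intro k
    obtain ⟨n, hn, hpre⟩ := hτ (k + 1)
    have hk : (σseq n k, sseq n (k + 1)) = τ k := hpre k (Nat.lt_succ_self k)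
    have hσk : σ k = σseq n k := congrArg Prod.fst hk.symm
    have hsk1 : s (k + 1) = sseq n (k + 1) := by
      show (τ k).2 = sseq n (k + 1)
      rw [← hk]
    have hsk : s k = sseq n k := by
      cases k with
      | zero => show T.init = sseq n 0; rw [hs0 n]
      | succ j =>
        have hj : (σseq n j, sseq n (j + 1)) = τ j := hpre j (by omega)
        show (τ j).2 = sseq n (j + 1)
        rw [← hj]
    rw [hσk, hsk1, hsk]
    exact hsstep n k
  · -- subset similarity
    intro k i hdiff
    obtain ⟨n, hn, hpre⟩ := hτ (k + 1)
    have hk : (σseq n k, sseq n (k + 1)) = τ k := hpre k (Nat.lt_succ_self k)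
    have hσk : σ k = σseq n k := congrArg Prod.fst hk.symm
    have hd2 : (i ∈ (σseq n k).1) ≠ (i ∈ (π k).1) := by rw [← hσk]; exact hdiff
    have := hσsim n k i hd2
    rwa [hρpre n k (by omega)] at this
  · -- not in E
    rw [hΦE]
    rintro ⟨m, hm⟩
    obtain ⟨n, hn, hpre⟩ := hτ m
    have hpm : wordPrefix (σseq n) m = wordPrefix σ m := by
      rw [wordPrefix_eq_iff]
      intro k hk
      exact congrArg Prod.fst (hpre k hk)
    exact hσE n (by rw [hΦE]; exact ⟨m, by rwa [hpm]⟩)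

end CauseGuaranteeAux

/-- If the effect is a guarantee property, then its cause is a guarantee property. -/
theorem cause_guarantee {S I O : Type*} [Fintype S] [Fintype I] [Fintype O]
    (T : FinSystem S I O) (π : ℕ → Set I × Set O) (hπ : IsTrace T π)
    (E : Set (ℕ → Set I × Set O)) (C : Set (ℕ → Set I)) (hC : IsCause T π E C)
    (hE : IsGuaranteeProperty E) : IsGuaranteeProperty C := by
  classical
  obtain ⟨hSat, hCf, hMin⟩ := hC
  obtain ⟨ΦE, hΦE⟩ := hE
  have key : ∀ ρ : ℕ → Set I, ρ ∉ causeG C →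
      ∃ σ, IsTrace T σ ∧ SubsetSim π σ ρ ∧ σ ∉ E :=
    fun ρ hρ => key_counterfactual T π E ΦE hΦE C hCf ρ hρ
  have hSatG : SatCond T π E (causeG C) := by
    intro π' hπ' hin
    obtain ⟨hπ'C, hπ'E⟩ := hSat π' hπ' hin
    refine ⟨?_, hπ'E⟩
    by_contra hnG
    obtain ⟨σ, hσtr, hσsim, hσE⟩ := key _ hnG
    have hins : traceInputs σ = traceInputs π := by
      funext k
      ext i
      have h2 : ¬((i ∈ (σ k).1) ≠ (i ∈ (π k).1)) := by
        intro hne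
        exact (hσsim k i hne) (by rw [hin]; rfl)
      rw [not_ne_iff] at h2
      exact iff_of_eq h2
    exact hσE (hSat σ hσtr hins).2
  have hCfG : CfCond T π E (causeG C) := fun ρ hρ => key ρ hρ
  have hGC : causeG C = C := by
    by_contra hne
    exact hMin ⟨causeG C, ssubset_iff_subset_ne.2 ⟨causeG_subset C, hne⟩, hSatG, hCfG⟩
  rw [← hGC]
  exact ⟨causePhi C, rfl⟩
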